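/- Let {K_i} be a tower of number fields with K_0 = K, and let p be a nonzero prime ideal of O_K that splits completely in K_i for every i. Suppose φ_∞ = lim_{i→∞} [K_i:ℚ]/g_{K_i} exists and is strictly positive. Then liminf_{i→∞} Φ_{Np}(K_i)/g_{K_i} ≥ φ_∞/[K:ℚ] > 0, where Np is the absolute norm of p. -/

import Mathlib

/-!
If `p` splits completely in `K_i`, the `[K_i : K]` primes of `K_i` above `p` all have norm `Np`,
so `[K_i : ℚ] ≤ [K : ℚ] · Φ_{Np}(K_i)`; dividing by `g_{K_i}` and passing to the liminf gives the
bound. Conversely the distinct primes of norm `q` all divide `(q)`, whose norm is `q ^ [K_i : ℚ]`,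
so `Φ_q(K_i) ≤ [K_i : ℚ]`. This keeps `Φ_{Np}(K_i) / g_{K_i}` bounded, without which the liminf
in `ℝ` would be a junk value.
-/

open NumberField Filter Topology

noncomputable section

/-- A fixed algebraic closure of `ℚ`; towers of number fields live inside it. -/
abbrev Qbar : Type := AlgebraicClosure ℚ

instance (K : IntermediateField ℚ Qbar) [FiniteDimensional ℚ K] : NumberField K := ⟨⟩

open scoped Classical in
/-- The genus of a number field: `g_K = (1/2)·log |d_K|` (junk value `0` if `K` is not a
number field). -/
def genus (K : IntermediateField ℚ Qbar) : ℝ :=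
  if h : FiniteDimensional ℚ K then
    letI := h
    Real.log |(NumberField.discr K : ℝ)| / 2
  else 0

open scoped Classical in
/-- `Φ_q(K)`: the number of nonzero prime ideals of `O_K` of absolute norm `q`
(junk value `0` if `K` is not a number field). -/
def PhiQ (K : IntermediateField ℚ Qbar) (q : ℕ) : ℕ :=
  if h : FiniteDimensional ℚ K then
    letI := h
    Nat.card {P : Ideal (𝓞 K) // P.IsPrime ∧ Ideal.absNorm P = q}
  else 0

/-- `Φ_ℝ(K)`: the number of real places of `K`. -/
def PhiR (K : IntermediateField ℚ Qbar) : ℕ :=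
  Nat.card {w : InfinitePlace K // w.IsReal}

/-- `Φ_ℂ(K)`: the number of complex places of `K`. -/
def PhiC (K : IntermediateField ℚ Qbar) : ℕ :=
  Nat.card {w : InfinitePlace K // w.IsComplex}

/-- A rational prime `p` splits completely in `L` if every prime of `O_L` above `p` has
ramification index `1` and residue degree `1` over `p`. -/
def SplitsCompletelyRat (p : ℕ) (L : IntermediateField ℚ Qbar) : Prop :=
  ∀ P : Ideal (𝓞 L), P.IsPrime → (p : 𝓞 L) ∈ P →
    Ideal.ramificationIdx' (Ideal.span {(p : ℤ)}) P = 1 ∧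
    Ideal.inertiaDeg' (Ideal.span {(p : ℤ)}) P = 1

/-- A nonzero prime `p` of `O_K` splits completely in `L ⊇ K` if every prime of `O_L`
lying over it has ramification index `1` and residue degree `1` over it. -/
def SplitsCompletely {K L : IntermediateField ℚ Qbar} (h : K ≤ L)
    (p : Ideal (𝓞 K)) : Prop :=
  ∀ P : Ideal (𝓞 L), P.IsPrime →
    Ideal.comap (RingOfIntegers.mapRingHom (IntermediateField.inclusion h)) P = p →
    letI : Algebra (𝓞 K) (𝓞 L) :=
      RingHom.toAlgebra (RingOfIntegers.mapRingHom (IntermediateField.inclusion h))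
    Ideal.ramificationIdx' p P = 1 ∧
    Ideal.inertiaDeg' p P = 1

open Module

namespace Ideal

variable {R S : Type*} [CommRing R] [CommRing S] [Algebra R S]

theorem finite_setOf_isPrime_absNorm_eq [IsDedekindDomain S] [Module.Free ℤ S]
    [Module.Finite ℤ S] [CharZero S] (q : ℕ) :
    {P : Ideal S | P.IsPrime ∧ absNorm P = q}.Finite :=
  (finite_setOfPred_absNorm_eq q).subset fun _ hP => hP.2

theorem card_primes_absNorm_eq_le_finrank [IsDedekindDomain S] [Module.Free ℤ S]
    [Module.Finite ℤ S] [CharZero S] {q : ℕ} (hq : 1 < q) :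
    Nat.card {P : Ideal S // P.IsPrime ∧ absNorm P = q} ≤ finrank ℤ S := by
  have hfin := finite_setOf_isPrime_absNorm_eq (S := S) q
  set T := hfin.toFinset
  have hmem {P : Ideal S} (hP : P ∈ T) : P.IsPrime ∧ absNorm P = q := hfin.mem_toFinset.mp hP
  have hdvd : ∏ P ∈ T, P ∣ span {(q : S)} := by
    refine Finset.prod_primes_dvd _ (fun P hP => ?_) fun P hP => ?_
    · refine prime_of_isPrime (fun hbot => ?_) (hmem hP).1
      have := (hmem hP).2
      rw [hbot, absNorm_bot] at this
      omega
    · rw [dvd_span_singleton, ← (hmem hP).2]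
      exact absNorm_mem P
  have hnorm : q ^ T.card ∣ q ^ finrank ℤ S := by
    have := map_dvd absNorm hdvd
    rwa [map_prod, Finset.prod_congr rfl fun P hP => (hmem hP).2, Finset.prod_const,
      absNorm_span_natCast] at this
  exact (Nat.card_eq_card_finite_toFinset hfin).trans_le
    ((Nat.pow_dvd_pow_iff_le_right hq).mp hnorm)

theorem finrank_eq_card_primesOver_of_splits [IsDomain R] [Module.Finite R S] [Module.Flat R S]
    (p : Ideal R) [p.IsPrime] [Finite (p.primesOver S)]
    (hsplit : ∀ P ∈ p.primesOver S, P.ramificationIdx R = 1 ∧ P.inertiaDeg R = 1) :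
    finrank R S = Nat.card (p.primesOver S) := by
  have := Fintype.ofFinite (p.primesOver S)
  rw [← sum_ramification_inertia_eq_finrank p S, Nat.card_eq_fintype_card,
    Fintype.card_eq_sum_ones]
  refine Finset.sum_congr rfl fun P _ => ?_
  rw [(hsplit P P.2).1, (hsplit P P.2).2]

theorem finrank_le_card_primes_absNorm_eq_of_splits [IsDedekindDomain R] [Module.Free ℤ R]
    [IsDedekindDomain S] [Module.Free ℤ S] [Module.Finite ℤ S] [CharZero S]
    [Module.Finite R S] [Module.IsTorsionFree R S] (p : Ideal R) [p.IsPrime] (hp0 : p ≠ ⊥)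
    (hsplit : ∀ P ∈ p.primesOver S, P.ramificationIdx R = 1 ∧ P.inertiaDeg R = 1) :
    finrank R S ≤ Nat.card {P : Ideal S // P.IsPrime ∧ absNorm P = absNorm p} := by
  have : Finite {P : Ideal S // P.IsPrime ∧ absNorm P = absNorm p} :=
    (finite_setOf_isPrime_absNorm_eq _).to_subtype
  have : p.IsMaximal := IsPrime.isMaximal inferInstance hp0
  rw [finrank_eq_card_primesOver_of_splits p hsplit]
  refine Nat.card_le_card_of_injective (fun P => ⟨P.1, P.2.1, ?_⟩) fun P Q hPQ => ?_
  · have ⟨_, _⟩ := P.2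
    rw [← absNorm_pow_inertiaDeg p P.1, (hsplit P P.2).2, pow_one]
  · exact Subtype.ext (congrArg Subtype.val hPQ :)

end Ideal

theorem PhiQ_eq_card (K : IntermediateField ℚ Qbar) [FiniteDimensional ℚ K] (q : ℕ) :
    PhiQ K q = Nat.card {P : Ideal (𝓞 K) // P.IsPrime ∧ Ideal.absNorm P = q} :=
  dif_pos ‹_›

theorem PhiQ_le_finrank (K : IntermediateField ℚ Qbar) [FiniteDimensional ℚ K] {q : ℕ}
    (hq : 1 < q) : PhiQ K q ≤ finrank ℚ K := by
  rw [PhiQ_eq_card, ← RingOfIntegers.rank]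
  exact Ideal.card_primes_absNorm_eq_le_finrank hq

theorem SplitsCompletely.finrank_le_mul_PhiQ {K L : IntermediateField ℚ Qbar}
    [FiniteDimensional ℚ K] [FiniteDimensional ℚ L] {h : K ≤ L} {p : Ideal (𝓞 K)} [p.IsPrime]
    (hp0 : p ≠ ⊥) (hsplit : SplitsCompletely h p) :
    finrank ℚ L ≤ finrank ℚ K * PhiQ L (Ideal.absNorm p) := by
  let : Algebra (𝓞 K) (𝓞 L) :=
    (RingOfIntegers.mapRingHom (IntermediateField.inclusion h)).toAlgebra
  have : FaithfulSMul (𝓞 K) (𝓞 L) := (faithfulSMul_iff_algebraMap_injective _ _).mpr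
    fun x y hxy => RingOfIntegers.ext <| (IntermediateField.inclusion h).injective <|
      congrArg ((↑) : 𝓞 L → L) hxy
  have : Module.Finite (𝓞 K) (𝓞 L) := Module.Finite.of_restrictScalars_finite ℤ _ _
  have : p.IsMaximal := Ideal.IsPrime.isMaximal inferInstance hp0
  rw [PhiQ_eq_card, ← RingOfIntegers.rank, ← RingOfIntegers.rank,
    ← Module.finrank_mul_finrank' (R := ℤ) (S := 𝓞 K) (𝓞 L)]
  gcongr
  refine Ideal.finrank_le_card_primes_absNorm_eq_of_splits p hp0 fun P ⟨_, _⟩ => ?_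
  have : P.IsMaximal := Ideal.IsMaximal.of_liesOver_isMaximal P p
  rw [← Ideal.ramificationIdx'_eq_ramificationIdx p P hp0, ← Ideal.inertiaDeg'_eq_inertiaDeg p P]
  exact hsplit P ‹_› (Ideal.LiesOver.over (P := P) (p := p)).symm

theorem div_le_liminf_div_of_tendsto {ι : Type*} {l : Filter ι} [l.NeBot] {a b g : ι → ℝ}
    {φ c : ℝ} (hφ : Tendsto (fun i => a i / g i) l (𝓝 φ)) (hφ0 : 0 < φ) (hc : 0 < c)
    (ha : ∀ i, 0 ≤ a i) (hab : ∀ i, a i ≤ c * b i) (hba : ∀ i, b i ≤ a i) :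
    φ / c ≤ liminf (fun i => b i / g i) l := by
  have hg : ∀ᶠ i in l, 0 < g i := (hφ.eventually (eventually_gt_nhds hφ0)).mono fun i hi => by
    by_contra! hgi
    exact (div_nonpos_of_nonneg_of_nonpos (ha i) hgi).not_gt hi
  have hlow : ∀ᶠ i in l, a i / g i / c ≤ b i / g i := hg.mono fun i hgi => by
    rw [div_right_comm]
    exact div_le_div_of_nonneg_right ((div_le_iff₀' hc).mpr (hab i)) hgi.le
  have hup : ∀ᶠ i in l, b i / g i ≤ a i / g i :=
    hg.mono fun i hgi => div_le_div_of_nonneg_right (hba i) hgi.le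
  calc φ / c = liminf (fun i => a i / g i / c) l := (hφ.div_const c).liminf_eq.symm
    _ ≤ liminf (fun i => b i / g i) l :=
      liminf_le_liminf hlow (hφ.div_const c).isBoundedUnder_ge
        (hφ.isBoundedUnder_le.mono_le hup).isCoboundedUnder_ge

theorem liminf_phi_of_split_prime_general
    (K : ℕ → IntermediateField ℚ Qbar)
    [∀ i, FiniteDimensional ℚ (K i)]
    (hle : ∀ i, K 0 ≤ K i)
    (p : Ideal (𝓞 (K 0))) (hp : p.IsPrime) (hp0 : p ≠ ⊥)
    (hsplit : ∀ i, SplitsCompletely (hle i) p)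
    (φ : ℝ) (hφpos : 0 < φ)
    (hφ : Tendsto (fun i => (Module.finrank ℚ (K i) : ℝ) / genus (K i)) atTop (𝓝 φ)) :
    φ / (Module.finrank ℚ (K 0) : ℝ) ≤
      liminf (fun i => (PhiQ (K i) (Ideal.absNorm p) : ℝ) / genus (K i)) atTop ∧
    0 < φ / (Module.finrank ℚ (K 0) : ℝ) := by
  have hq : 1 < Ideal.absNorm p := by
    have h0 : Ideal.absNorm p ≠ 0 := Ideal.absNorm_eq_zero_iff.not.mpr hp0
    have h1 : Ideal.absNorm p ≠ 1 := Ideal.absNorm_eq_one_iff.not.mpr hp.ne_top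
    omega
  have hn0 : (0 : ℝ) < finrank ℚ (K 0) := mod_cast finrank_pos
  refine ⟨div_le_liminf_div_of_tendsto hφ hφpos hn0 (fun _ => Nat.cast_nonneg _)
    (fun i => mod_cast (hsplit i).finrank_le_mul_PhiQ hp0)
    (fun i => mod_cast PhiQ_le_finrank (K i) hq), div_pos hφpos hn0⟩

/-- Proposition `propdec`, first part: if `p` is a nonzero prime of `O_K`, `K = K_0`, splitting
completely in every field of a tower with `φ_∞ > 0`, then
`liminf Φ_{Np}(K_i)/g_{K_i} ≥ φ_∞/[K:ℚ] > 0`. -/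
theorem liminf_phi_of_split_prime
    (K : ℕ → IntermediateField ℚ Qbar)
    [∀ i, FiniteDimensional ℚ (K i)]
    (hlt : ∀ i, K i < K (i + 1)) (hle : ∀ i, K 0 ≤ K i)
    (p : Ideal (𝓞 (K 0))) (hp : p.IsPrime) (hp0 : p ≠ ⊥)
    (hsplit : ∀ i, SplitsCompletely (hle i) p)
    (φ : ℝ) (hφpos : 0 < φ)
    (hφ : Tendsto (fun i => (Module.finrank ℚ (K i) : ℝ) / genus (K i)) atTop (𝓝 φ)) :
    φ / (Module.finrank ℚ (K 0) : ℝ) ≤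
      liminf (fun i => (PhiQ (K i) (Ideal.absNorm p) : ℝ) / genus (K i)) atTop ∧
    0 < φ / (Module.finrank ℚ (K 0) : ℝ) :=
  liminf_phi_of_split_prime_general K hle p hp hp0 hsplit φ hφpos hφ

end
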